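/- arXiv:2508.18375 — 2 statements merged into one kernel-verified Lean document; each statement's English description precedes it below -/
import Mathlib

section
/- Let G be a connected graph with at least one odd-degree vertex, and let T be a trail in G. Then T belongs to some minimum trail decomposition of G if and only if T begins and ends at distinct odd-degree vertices of G and every connected component of G with the edges of T removed that contains an edge has at least one odd-degree vertex. -/
/-- A trail in a simple graph: a walk with no repeated edges, together with its endpoints. -/
structure GraphTrail {V : Type*} (G : SimpleGraph V) where
  first : V
  last : V
  walk : G.Walk first last
  isTrail : walk.IsTrail

namespace GraphTrail

variable {V : Type*} {G : SimpleGraph V}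

/-- The list of edges traversed by the trail. -/
def edges (T : GraphTrail G) : List (Sym2 V) := T.walk.edges

/-- The list of vertices visited by the trail (with multiplicity). -/
def support (T : GraphTrail G) : List V := T.walk.support

end GraphTrail

/-- A collection of trails is edge-disjoint if no two distinct trails share an edge. -/
def TrailsEdgeDisjoint {V : Type*} {G : SimpleGraph V} (C : Finset (GraphTrail G)) : Prop :=
  (C : Set (GraphTrail G)).Pairwise fun T₁ T₂ => ∀ e, e ∈ T₁.edges → e ∉ T₂.edges

/-- A trail cover of `G`: a set of pairwise edge-disjoint trails visiting every vertex. -/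
def IsTrailCover {V : Type*} (G : SimpleGraph V) (C : Finset (GraphTrail G)) : Prop :=
  TrailsEdgeDisjoint C ∧ ∀ v : V, ∃ T ∈ C, v ∈ T.support

/-- A trail decomposition of `G`: a set of pairwise edge-disjoint trails covering every edge. -/
def IsTrailDecomposition {V : Type*} (G : SimpleGraph V) (C : Finset (GraphTrail G)) : Prop :=
  TrailsEdgeDisjoint C ∧ ∀ e ∈ G.edgeSet, ∃ T ∈ C, e ∈ T.edges

open SimpleGraph Finset List

namespace TrailDecomp

variable {V : Type*}

noncomputable def deg (H : SimpleGraph V) (v : V) : ℕ := (H.neighborSet v).ncard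

variable [Fintype V] [DecidableEq V]

lemma deg_eq_degree (H : SimpleGraph V) [DecidableRel H.Adj] (v : V) :
    deg H v = H.degree v := by
  rw [deg, degree, ← Set.ncard_coe_finset, neighborFinset_def, Set.coe_toFinset]

lemma deg_pos_iff {H : SimpleGraph V} {v : V} : 0 < deg H v ↔ ∃ y, H.Adj v y := by
  rw [deg, Set.ncard_pos (Set.toFinite _)]
  exact ⟨fun ⟨y, hy⟩ => ⟨y, hy⟩, fun ⟨y, hy⟩ => ⟨y, hy⟩⟩

noncomputable def oddF (H : SimpleGraph V) : Finset V := by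
  classical exact univ.filter (fun v => Odd (deg H v))

lemma mem_oddF {H : SimpleGraph V} {v : V} : v ∈ oddF H ↔ Odd (deg H v) := by
  simp [oddF]

lemma even_card_oddF (H : SimpleGraph V) : Even (oddF H).card := by
  classical
  have h := SimpleGraph.even_card_odd_degree_vertices (G := H)
  convert h using 2
  ext v
  simp [mem_oddF, deg_eq_degree]

lemma trail_odd_countP_iff {H : SimpleGraph V} {u v : V} {p : H.Walk u v} (hp : p.IsTrail)
    (x : V) : Odd (p.edges.countP fun e => x ∈ e) ↔ u ≠ v ∧ (x = u ∨ x = v) := by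
  rw [← Nat.not_even_iff_odd, hp.even_countP_edges_iff]
  by_cases h : u = v
  · simp [h]
  · push_neg
    simp only [h, Ne, not_false_iff, true_implies, not_and_or, not_not]
    tauto

lemma deg_deleteEdges (H : SimpleGraph V) {u v : V} {p : H.Walk u v} (hp : p.IsTrail) (x : V) :
    deg (H.deleteEdges {e | e ∈ p.edges}) x + p.edges.countP (fun e => x ∈ e) = deg H x := by
  classical
  set A := (H.neighborFinset x).filter (fun y => s(x,y) ∈ p.edges) with hA
  set B := (H.neighborFinset x).filter (fun y => s(x,y) ∉ p.edges) with hB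
  have hsplit := Finset.card_filter_add_card_filter_not (s := H.neighborFinset x)
      (p := fun y => s(x,y) ∈ p.edges)
  simp only [← hA, ← hB] at hsplit
  have hdegx : deg H x = (H.neighborFinset x).card := by rw [deg_eq_degree, degree]
  have hcnt : p.edges.countP (fun e => x ∈ e) = A.card := by
    rw [List.countP_eq_length_filter]
    have hnd : (p.edges.filter (fun e => x ∈ e)).Nodup := hp.edges_nodup.filter _
    rw [← List.toFinset_card_of_nodup hnd]
    refine (Finset.card_bij (fun y _ => s(x,y)) ?_ ?_ ?_).symm
    · intro y hy
      rw [hA, Finset.mem_filter] at hy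
      simp only [List.mem_toFinset, List.mem_filter, decide_eq_true_eq, Sym2.mem_iff]
      exact ⟨hy.2, by simp⟩
    · intro y₁ h₁ y₂ h₂ h
      exact Sym2.congr_right.mp h
    · intro e he
      simp only [List.mem_toFinset, List.mem_filter, decide_eq_true_eq] at he
      obtain ⟨he₁, hx⟩ := he
      refine ⟨Sym2.Mem.other hx, ?_, Sym2.other_spec hx⟩
      rw [hA, Finset.mem_filter, mem_neighborFinset]
      have hE : s(x, Sym2.Mem.other hx) ∈ H.edgeSet := by
        rw [Sym2.other_spec hx]; exact p.edges_subset_edgeSet he₁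
      rw [SimpleGraph.mem_edgeSet] at hE
      exact ⟨hE, by rw [Sym2.other_spec hx]; exact he₁⟩
  have hdel : deg (H.deleteEdges {e | e ∈ p.edges}) x = B.card := by
    rw [deg_eq_degree, degree]
    congr 1
    ext y
    simp only [mem_neighborFinset, SimpleGraph.deleteEdges_adj, Set.mem_setOf_eq, hB,
      Finset.mem_filter]
  omega



lemma countP_eq_card_filter_nbr {H : SimpleGraph V} [DecidableRel H.Adj] {u v : V} {p : H.Walk u v}
    (hp : p.IsTrail) (x : V) :
    p.edges.countP (fun e => x ∈ e) =
      ((H.neighborFinset x).filter (fun y => s(x,y) ∈ p.edges)).card := by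
  classical
  rw [List.countP_eq_length_filter]
  have hnd : (p.edges.filter (fun e => x ∈ e)).Nodup := hp.edges_nodup.filter _
  rw [← List.toFinset_card_of_nodup hnd]
  refine (Finset.card_bij (fun y _ => s(x,y)) ?_ ?_ ?_).symm
  · intro y hy
    rw [Finset.mem_filter] at hy
    simp only [List.mem_toFinset, List.mem_filter, decide_eq_true_eq, Sym2.mem_iff]
    exact ⟨hy.2, by simp⟩
  · intro y₁ h₁ y₂ h₂ h
    exact Sym2.congr_right.mp h
  · intro e he
    simp only [List.mem_toFinset, List.mem_filter, decide_eq_true_eq] at he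
    obtain ⟨he₁, hx⟩ := he
    refine ⟨Sym2.Mem.other hx, ?_, Sym2.other_spec hx⟩
    rw [Finset.mem_filter, mem_neighborFinset]
    have hE : s(x, Sym2.Mem.other hx) ∈ H.edgeSet := by
      rw [Sym2.other_spec hx]; exact p.edges_subset_edgeSet he₁
    rw [SimpleGraph.mem_edgeSet] at hE
    exact ⟨hE, by rw [Sym2.other_spec hx]; exact he₁⟩

lemma countP_le_deg {H : SimpleGraph V} {u v : V} {p : H.Walk u v} (hp : p.IsTrail) (x : V) :
    p.edges.countP (fun e => x ∈ e) ≤ deg H x := by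
  classical
  rw [countP_eq_card_filter_nbr hp, deg_eq_degree, degree]
  exact Finset.card_filter_le _ _

lemma exists_unused_edge {H : SimpleGraph V} {a b : V} {q : H.Walk a b} (hq : q.IsTrail) {y : V}
    (hlt : q.edges.countP (fun e => y ∈ e) ≠ deg H y) :
    ∃ y', H.Adj y y' ∧ s(y, y') ∉ q.edges := by
  classical
  by_contra hc
  push_neg at hc
  apply hlt
  rw [countP_eq_card_filter_nbr hq, deg_eq_degree, degree]
  congr 1
  refine Finset.filter_true_of_mem ?_
  intro y' hy'
  exact hc y' (by rwa [mem_neighborFinset] at hy')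

lemma edges_ne_nil_of_ne {H : SimpleGraph V} {u w : V} (p : H.Walk u w) (h : u ≠ w) :
    p.edges ≠ [] := by
  cases p with
  | nil => exact absurd rfl h
  | cons h' q => simp [Walk.edges_cons]

/-- Splice a closed trail into a trail at a common vertex. -/
lemma splice {H : SimpleGraph V} {u w z : V} (p : H.Walk u w) (hp : p.IsTrail)
    (hz : z ∈ p.support) (r : H.Walk z z) (hr : r.IsTrail)
    (hd : ∀ e ∈ r.edges, e ∉ p.edges) :
    ∃ q : H.Walk u w, q.IsTrail ∧ q.length = p.length + r.length ∧
      ∀ e, e ∈ q.edges ↔ e ∈ p.edges ∨ e ∈ r.edges := by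
  have hsp : p.edges = (p.takeUntil z hz).edges ++ (p.dropUntil z hz).edges := by
    conv_lhs => rw [← Walk.take_spec p hz]
    rw [Walk.edges_append]
  have hmemP : ∀ e, e ∈ p.edges ↔ e ∈ (p.takeUntil z hz).edges ∨ e ∈ (p.dropUntil z hz).edges := by
    intro e; rw [hsp, List.mem_append]
  have hlen : p.length = (p.takeUntil z hz).length + (p.dropUntil z hz).length := by
    have h := congr_arg Walk.length (Walk.take_spec p hz)
    rw [Walk.length_append] at h
    omega
  refine ⟨(p.takeUntil z hz).append (r.append (p.dropUntil z hz)), ?_, ?_, ?_⟩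
  · rw [Walk.isTrail_def, Walk.edges_append, Walk.edges_append]
    have hnd := hp.edges_nodup
    rw [hsp, List.nodup_append] at hnd
    have hrnd := hr.edges_nodup
    rw [List.nodup_append]
    refine ⟨hnd.1, ?_, ?_⟩
    · rw [List.nodup_append]
      refine ⟨hrnd, hnd.2.1, ?_⟩
      intro e he e' hed heq
      subst heq
      exact hd e he ((hmemP e).mpr (Or.inr hed))
    · intro e he e' hmem heq
      subst heq
      rcases List.mem_append.mp hmem with h1 | h2
      · exact hd e h1 ((hmemP e).mpr (Or.inl he))
      · exact hnd.2.2 e he e h2 rfl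
  · rw [Walk.length_append, Walk.length_append]; omega
  · intro e
    rw [Walk.edges_append, Walk.edges_append, hsp]
    simp only [List.mem_append]
    tauto

lemma trail_length_le {H : SimpleGraph V} {a b : V} {q : H.Walk a b} (hq : q.IsTrail) :
    q.length ≤ (Fintype.card (Sym2 V)) := by
  classical
  rw [← Walk.length_edges]
  rw [← List.toFinset_card_of_nodup hq.edges_nodup]
  exact le_trans (Finset.card_le_card (Finset.subset_univ _)) (le_of_eq (Finset.card_univ))

/-- There is a trail of maximal length between two reachable vertices. -/
lemma exists_max_trail_between {H : SimpleGraph V} {u w : V} (h : H.Reachable u w) :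
    ∃ p : H.Walk u w, p.IsTrail ∧ ∀ q : H.Walk u w, q.IsTrail → q.length ≤ p.length := by
  classical
  set P : ℕ → Prop := fun n => ∃ p : H.Walk u w, p.IsTrail ∧ p.length = n with hP
  have h0 : P ((Classical.choice h).toPath.1.length) :=
    ⟨(Classical.choice h).toPath.1, (Classical.choice h).toPath.2.isTrail, rfl⟩
  set N := Fintype.card (Sym2 V) with hN
  have hble : ∀ {n}, P n → n ≤ N := by
    rintro n ⟨p, hp, rfl⟩
    exact trail_length_le hp
  have hspec : P (Nat.findGreatest P N) := Nat.findGreatest_spec (hble h0) h0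
  obtain ⟨p, hp, hlen⟩ := hspec
  refine ⟨p, hp, fun q hq => ?_⟩
  rw [hlen]
  exact Nat.le_findGreatest (hble ⟨q, hq, rfl⟩) ⟨q, hq, rfl⟩

/-- There is a trail of maximal length starting at a vertex (over all endpoints). -/
lemma exists_max_trail_from {H : SimpleGraph V} (z : V) :
    ∃ (y : V) (p : H.Walk z y), p.IsTrail ∧
      ∀ (y' : V) (q : H.Walk z y'), q.IsTrail → q.length ≤ p.length := by
  classical
  set P : ℕ → Prop := fun n => ∃ (y : V) (p : H.Walk z y), p.IsTrail ∧ p.length = n with hP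
  have h0 : P 0 := ⟨z, Walk.nil, by simp [Walk.isTrail_def], rfl⟩
  set N := Fintype.card (Sym2 V) with hN
  have hble : ∀ {n}, P n → n ≤ N := by
    rintro n ⟨y, p, hp, rfl⟩
    exact trail_length_le hp
  have hspec : P (Nat.findGreatest P N) := Nat.findGreatest_spec (hble h0) h0
  obtain ⟨y, p, hp, hlen⟩ := hspec
  refine ⟨y, p, hp, fun y' q hq => ?_⟩
  rw [hlen]
  exact Nat.le_findGreatest (hble ⟨y', q, hq, rfl⟩) ⟨y', q, hq, rfl⟩

/-- Walking in `H` from `x` to `y`, either we can reach `y` avoiding the edges of `t`,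
or we can reach a vertex on the support of `t`. -/
lemma walk_reach_aux {H : SimpleGraph V} {c d : V} (t : H.Walk c d) {x y : V}
    (q : H.Walk x y) :
    (∃ z ∈ t.support, (H.deleteEdges {e | e ∈ t.edges}).Reachable x z) ∨
      (H.deleteEdges {e | e ∈ t.edges}).Reachable x y := by
  induction q with
  | nil => exact Or.inr (Reachable.refl _)
  | @cons a b y' hab q ih =>
    by_cases he : s(a, b) ∈ t.edges
    · exact Or.inl ⟨a, t.fst_mem_support_of_mem_edges he, Reachable.refl _⟩
    · have hadj : (H.deleteEdges {e | e ∈ t.edges}).Adj a b := by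
        rw [SimpleGraph.deleteEdges_adj]
        exact ⟨hab, he⟩
      rcases ih with ⟨z, hz, hr⟩ | hr
      · exact Or.inl ⟨z, hz, hadj.reachable.trans hr⟩
      · exact Or.inr (hadj.reachable.trans hr)

/-- In a graph where every vertex reachable from `z` has even degree and `z` has an edge,
there is a nonempty closed trail at `z`. -/
lemma exists_closed_trail {H : SimpleGraph V} {z : V} (hz : 0 < deg H z)
    (heven : ∀ y, H.Reachable z y → Even (deg H y)) :
    ∃ r : H.Walk z z, r.IsTrail ∧ 0 < r.length := by
  classical
  obtain ⟨y, p, hp, hmax⟩ := exists_max_trail_from (H := H) z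
  obtain ⟨y₀, hy₀⟩ := deg_pos_iff.mp hz
  have hpos : 0 < p.length := by
    have h1 := hmax y₀ (Walk.cons hy₀ Walk.nil) (by simp [Walk.isTrail_def])
    have h2 : 1 ≤ p.length := by simpa using h1
    omega
  have hyz : y = z := by
    by_contra hne
    have hodd : Odd (p.edges.countP fun e => y ∈ e) :=
      (trail_odd_countP_iff hp y).mpr ⟨fun h => hne h.symm, Or.inr rfl⟩
    have hevy : Even (deg H y) := heven y ⟨p⟩
    have hne' : p.edges.countP (fun e => y ∈ e) ≠ deg H y := by
      intro h
      rw [h] at hodd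
      exact (Nat.not_even_iff_odd.mpr hodd) hevy
    obtain ⟨y', hadj, hnotin⟩ := exists_unused_edge hp hne'
    have hq : (p.append (Walk.cons hadj Walk.nil)).IsTrail := by
      rw [Walk.isTrail_def, Walk.edges_append]
      simp only [Walk.edges_cons, Walk.edges_nil]
      rw [List.nodup_append]
      refine ⟨hp.edges_nodup, by simp, ?_⟩
      intro e he b hmem heq
      simp only [List.mem_singleton] at hmem
      subst hmem
      subst heq
      exact hnotin he
    have := hmax _ _ hq
    rw [Walk.length_append] at this
    simp at this
  subst hyz
  exact ⟨p, hp, hpos⟩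

/-- The connected component of `w`, as a graph. -/
def classGraph (H : SimpleGraph V) (w : V) : SimpleGraph V where
  Adj a b := H.Adj a b ∧ H.Reachable w a ∧ H.Reachable w b
  symm := by
    constructor
    rintro a b ⟨h1, h2, h3⟩
    exact ⟨h1.symm, h3, h2⟩
  loopless := by
    constructor
    rintro a ⟨h1, -⟩
    exact H.irrefl h1

lemma deg_classGraph {H : SimpleGraph V} {w a : V} (h : H.Reachable w a) :
    deg (classGraph H w) a = deg H a := by
  unfold deg
  congr 1
  ext y
  simp only [mem_neighborSet, classGraph]
  constructor
  · rintro ⟨h1, -, -⟩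
    exact h1
  · intro h1
    exact ⟨h1, h, h.trans h1.reachable⟩

lemma deg_classGraph_zero {H : SimpleGraph V} {w a : V} (h : ¬ H.Reachable w a) :
    deg (classGraph H w) a = 0 := by
  have he : (classGraph H w).neighborSet a = ∅ := by
    ext y
    simp only [mem_neighborSet, Set.mem_empty_iff_false, iff_false, classGraph]
    rintro ⟨-, h2, -⟩
    exact h h2
  rw [deg, he, Set.ncard_empty]

lemma exists_other_odd {H : SimpleGraph V} {w : V} (hw : Odd (deg H w)) :
    ∃ u, u ≠ w ∧ Odd (deg H u) ∧ H.Reachable w u := by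
  classical
  have hwO : w ∈ oddF (classGraph H w) := by
    rw [mem_oddF, deg_classGraph (Reachable.refl w)]
    exact hw
  have hev := even_card_oddF (classGraph H w)
  by_contra hc
  push_neg at hc
  have hsub : oddF (classGraph H w) = {w} := by
    apply Finset.eq_singleton_iff_unique_mem.mpr
    refine ⟨hwO, fun u hu => ?_⟩
    rw [mem_oddF] at hu
    by_contra hne
    by_cases hr : H.Reachable w u
    · rw [deg_classGraph hr] at hu
      exact (hc u hne hu) hr
    · rw [deg_classGraph_zero hr] at hu
      simp at hu
  rw [hsub] at hev
  simp at hev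

/-- Transport a trail along a subgraph relation. -/
def liftT {H K : SimpleGraph V} (hle : H ≤ K) (T : GraphTrail H) : GraphTrail K where
  first := T.first
  last := T.last
  walk := T.walk.transfer K (fun e he => (SimpleGraph.edgeSet_mono hle) (T.walk.edges_subset_edgeSet he))
  isTrail := by
    rw [Walk.isTrail_def, Walk.edges_transfer]
    exact T.isTrail.edges_nodup

@[simp] lemma liftT_edges {H K : SimpleGraph V} (hle : H ≤ K) (T : GraphTrail H) :
    (liftT hle T).edges = T.edges := Walk.edges_transfer _ _

@[simp] lemma liftT_first {H K : SimpleGraph V} (hle : H ≤ K) (T : GraphTrail H) :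
    (liftT hle T).first = T.first := rfl

@[simp] lemma liftT_last {H K : SimpleGraph V} (hle : H ≤ K) (T : GraphTrail H) :
    (liftT hle T).last = T.last := rfl

/-- A good decomposition: edge-disjoint open trails covering all edges. -/
def GoodDecomp (H : SimpleGraph V) (D : Finset (GraphTrail H)) : Prop :=
  TrailsEdgeDisjoint D ∧ (∀ e ∈ H.edgeSet, ∃ T ∈ D, e ∈ T.edges) ∧
    ∀ T ∈ D, T.first ≠ T.last

lemma deg_le_of_le {H K : SimpleGraph V} (hle : H ≤ K) (v : V) : deg H v ≤ deg K v :=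
  Set.ncard_le_ncard (fun _ hy => hle hy) (Set.toFinite _)

lemma deg_pos_of_reachable {H : SimpleGraph V} {v z : V} (h : H.Reachable v z)
    (hv : 0 < deg H v) : 0 < deg H z := by
  obtain ⟨q⟩ := h.symm
  cases q with
  | nil => exact hv
  | cons hadj _ => exact deg_pos_iff.mpr ⟨_, hadj⟩

lemma edges_nonempty_of_open {H : SimpleGraph V} (T : GraphTrail H) (h : T.first ≠ T.last) :
    ∃ e, e ∈ T.edges := by
  have := edges_ne_nil_of_ne T.walk h
  cases he : T.walk.edges with
  | nil => exact absurd he this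
  | cons e l => exact ⟨e, by rw [GraphTrail.edges, he]; simp⟩
lemma oddF_deleteEdges {H : SimpleGraph V} {w u : V} {p : H.Walk w u} (hp : p.IsTrail)
    (hne : w ≠ u) (hw : Odd (deg H w)) (hu : Odd (deg H u)) :
    oddF (H.deleteEdges {e | e ∈ p.edges}) = oddF H \ {w, u} := by
  classical
  ext v
  have hd := deg_deleteEdges H hp v
  simp only [mem_oddF, Finset.mem_sdiff, Finset.mem_insert, Finset.mem_singleton, not_or]
  rw [Nat.odd_iff, Nat.odd_iff]
  by_cases hv : v = w ∨ v = u
  · have hodd : (p.edges.countP fun e => v ∈ e) % 2 = 1 := by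
      rw [← Nat.odd_iff]
      exact (trail_odd_countP_iff hp v).mpr ⟨hne, hv⟩
    have hdeg : deg H v % 2 = 1 := by
      rcases hv with rfl | rfl
      · exact Nat.odd_iff.mp hw
      · exact Nat.odd_iff.mp hu
    constructor
    · intro h1
      exfalso
      omega
    · rintro ⟨-, hnw, hnu⟩
      rcases hv with rfl | rfl
      · exact absurd rfl hnw
      · exact absurd rfl hnu
  · push_neg at hv
    have heven : (p.edges.countP fun e => v ∈ e) % 2 = 0 := by
      rw [← Nat.even_iff, ← Nat.not_odd_iff_even]
      intro h
      exact hv.elim (fun h1 h2 => (((trail_odd_countP_iff hp v).mp h).2.elim h1 h2))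
    simp only [hv.1, hv.2, not_false_iff, and_true]
    omega

/-- Key existence theorem: a graph in which every nontrivial component has an odd-degree
vertex admits a decomposition into open trails, with exactly half as many trails as
odd-degree vertices. -/
theorem exists_good_decomp : ∀ (n : ℕ) (H : SimpleGraph V), H.edgeSet.ncard = n →
    (∀ v, 0 < deg H v → ∃ w, H.Reachable v w ∧ Odd (deg H w)) →
    ∃ D : Finset (GraphTrail H), GoodDecomp H D ∧ 2 * D.card = (oddF H).card := by
  intro n
  induction n using Nat.strong_induction_on with
  | _ n IH =>
  intro H hn hyp
  classical
  by_cases hE : H.edgeSet = ∅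
  · refine ⟨∅, ⟨?_, ?_, ?_⟩, ?_⟩
    · intro A hA
      simp at hA
    · intro e he
      rw [hE] at he
      exact absurd he (Set.notMem_empty e)
    · intro T hT
      simp at hT
    · have hOF : oddF H = ∅ := by
        ext v
        simp only [mem_oddF, Finset.notMem_empty, iff_false]
        intro hv
        obtain ⟨y, hy⟩ := deg_pos_iff.mp hv.pos
        have hmem : s(v,y) ∈ H.edgeSet := hy
        rw [hE] at hmem
        exact hmem
      simp [hOF]
  · have hadj : ∃ a b, H.Adj a b := by
      obtain ⟨e₀, he₀⟩ := Set.nonempty_iff_ne_empty.mpr hE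
      induction e₀ using Sym2.ind with
      | _ x y => exact ⟨x, y, he₀⟩
    obtain ⟨a, b, hab⟩ := hadj
    obtain ⟨w, hrw, hwodd⟩ := hyp a (deg_pos_iff.mpr ⟨b, hab⟩)
    obtain ⟨u, hune, huodd, hru⟩ := exists_other_odd hwodd
    obtain ⟨p, hp, hmax⟩ := exists_max_trail_between hru
    have hne : w ≠ u := fun h => hune h.symm
    set H' := H.deleteEdges {e | e ∈ p.edges} with hH'
    have hle : H' ≤ H := SimpleGraph.deleteEdges_le _
    have hEdel : H'.edgeSet = H.edgeSet \ {e | e ∈ p.edges} :=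
      SimpleGraph.edgeSet_deleteEdges _
    obtain ⟨e₁, he₁⟩ : ∃ e, e ∈ p.edges :=
      List.exists_mem_of_ne_nil _ (edges_ne_nil_of_ne p hne)
    have hlt : H'.edgeSet.ncard < n := by
      rw [← hn]
      apply Set.ncard_lt_ncard _ (Set.toFinite _)
      constructor
      · rw [hEdel]; exact Set.diff_subset
      · intro hsub
        have : e₁ ∈ H'.edgeSet := hsub (p.edges_subset_edgeSet he₁)
        rw [hEdel] at this
        exact this.2 he₁
    -- the deleted graph still has the odd-component property
    have hyp' : ∀ v, 0 < deg H' v → ∃ y, H'.Reachable v y ∧ Odd (deg H' y) := by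
      intro v hv
      have hdd : ∀ x, deg H' x + p.edges.countP (fun e => x ∈ e) = deg H x := by
        intro x
        have h := deg_deleteEdges H hp x
        rwa [← hH'] at h
      by_contra hno
      push_neg at hno
      have hev : ∀ y, H'.Reachable v y → Even (deg H' y) := by
        intro y hy
        rw [← Nat.not_odd_iff_even]
        exact hno y hy
      -- find a vertex of the trail's support reachable from v in H'
      have hvH : 0 < deg H v := lt_of_lt_of_le hv (deg_le_of_le hle v)
      obtain ⟨w₀, hrw₀, hw₀odd⟩ := hyp v hvH
      obtain ⟨q⟩ := hrw₀
      have hz : ∃ z ∈ p.support, H'.Reachable v z := by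
        rcases walk_reach_aux p q with ⟨z, hz, hr⟩ | hr
        · exact ⟨z, hz, hr⟩
        · -- w₀ must be an endpoint of p
          have hd := deg_deleteEdges H hp w₀
          rw [← hH'] at hd
          have hcnt : Odd (p.edges.countP fun e => w₀ ∈ e) := by
            have heq : Even (deg H' w₀) := hev w₀ hr
            have hd2 := hdd w₀
            rw [Nat.odd_iff] at hw₀odd ⊢
            rw [Nat.even_iff] at heq
            omega
          rcases ((trail_odd_countP_iff hp w₀).mp hcnt).2 with rfl | rfl
          · exact ⟨w₀, p.start_mem_support, hr⟩
          · exact ⟨w₀, p.end_mem_support, hr⟩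
      obtain ⟨z, hzsup, hzr⟩ := hz
      have hzpos : 0 < deg H' z := deg_pos_of_reachable hzr hv
      have hzev : ∀ y, H'.Reachable z y → Even (deg H' y) := fun y hy =>
        hev y (hzr.trans hy)
      obtain ⟨r, hr, hrpos⟩ := exists_closed_trail hzpos hzev
      -- transfer r to H and splice into p
      have hrE : ∀ e ∈ r.edges, e ∈ H.edgeSet := fun e he => (SimpleGraph.edgeSet_mono hle) (r.edges_subset_edgeSet he)
      set r' := r.transfer H hrE with hr'
      have hr'T : r'.IsTrail := by
        rw [Walk.isTrail_def, Walk.edges_transfer]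
        exact hr.edges_nodup
      have hr'ed : r'.edges = r.edges := Walk.edges_transfer _ _
      have hdisj : ∀ e ∈ r'.edges, e ∉ p.edges := by
        intro e he
        rw [hr'ed] at he
        have : e ∈ H'.edgeSet := r.edges_subset_edgeSet he
        rw [hEdel] at this
        exact this.2
      obtain ⟨q', hq', hq'len, -⟩ := splice p hp hzsup r' hr'T hdisj
      have := hmax q' hq'
      have hrlen : r'.length = r.length := by
        rw [hr']
        exact Walk.length_transfer _ _
      omega
    obtain ⟨D', ⟨hdisj', hcov', hopen'⟩, hcard'⟩ := IH _ hlt H' rfl hyp'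
    set Tgt : GraphTrail H := ⟨w, u, p, hp⟩ with hTgt
    have hTgtE : Tgt.edges = p.edges := rfl
    have hliftE : ∀ S ∈ D', (liftT hle S).edges = S.edges := fun S _ => liftT_edges hle S
    have hSsubE : ∀ S : GraphTrail H', ∀ e ∈ S.edges, e ∈ H'.edgeSet := fun S e he =>
      S.walk.edges_subset_edgeSet he
    have hnotinT : ∀ S : GraphTrail H', ∀ e ∈ S.edges, e ∉ p.edges := by
      intro S e he hep
      have := hSsubE S e he
      rw [hEdel] at this
      exact this.2 hep
    have hinj : Set.InjOn (liftT hle) D' := by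
      intro S₁ h₁ S₂ h₂ heq
      by_contra hne'
      obtain ⟨e, he⟩ := edges_nonempty_of_open S₁ (hopen' S₁ (Finset.mem_coe.mp h₁))
      have he₂ : e ∈ S₂.edges := by
        have h1 : (liftT hle S₁).edges = (liftT hle S₂).edges := by rw [heq]
        rw [liftT_edges, liftT_edges] at h1
        rwa [← h1]
      exact hdisj' (Finset.mem_coe.mp h₁ : S₁ ∈ D') h₂ hne' e he he₂
    have hTgtnot : Tgt ∉ D'.image (liftT hle) := by
      intro hmem
      rw [Finset.mem_image] at hmem
      obtain ⟨S, hS, hSe⟩ := hmem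
      have : e₁ ∈ S.edges := by
        have h1 : (liftT hle S).edges = Tgt.edges := by rw [hSe]
        rw [liftT_edges, hTgtE] at h1
        rw [← h1] at he₁
        exact he₁
      exact hnotinT S e₁ this he₁
    refine ⟨insert Tgt (D'.image (liftT hle)), ⟨?_, ?_, ?_⟩, ?_⟩
    · -- edge-disjointness
      intro A hA B hB hAB
      simp only [Finset.coe_insert, Set.mem_insert_iff, Finset.mem_coe,
        Finset.mem_image] at hA hB
      rcases hA with rfl | ⟨S₁, hS₁, rfl⟩
      · rcases hB with rfl | ⟨S₂, hS₂, rfl⟩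
        · exact absurd rfl hAB
        · intro e he hB
          rw [liftT_edges] at hB
          exact hnotinT S₂ e hB (by rwa [hTgtE] at he)
      · rcases hB with rfl | ⟨S₂, hS₂, rfl⟩
        · intro e he hB
          rw [liftT_edges] at he
          exact hnotinT S₁ e he (by rwa [hTgtE] at hB)
        · have hSne : S₁ ≠ S₂ := fun h => hAB (by rw [h])
          intro e he hB
          rw [liftT_edges] at he hB
          exact hdisj' (Finset.mem_coe.mpr hS₁) (Finset.mem_coe.mpr hS₂) hSne e he hB
    · -- coverage
      intro e he
      by_cases hep : e ∈ p.edges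
      · exact ⟨Tgt, Finset.mem_insert_self _ _, by rwa [hTgtE]⟩
      · have : e ∈ H'.edgeSet := by
          rw [hEdel]
          exact ⟨he, hep⟩
        obtain ⟨S, hS, hSe⟩ := hcov' e this
        exact ⟨liftT hle S, Finset.mem_insert_of_mem (Finset.mem_image_of_mem _ hS),
          by rwa [liftT_edges]⟩
    · -- openness
      intro S hS
      rcases Finset.mem_insert.mp hS with rfl | hS'
      · exact hne
      · obtain ⟨S', hS'2, rfl⟩ := Finset.mem_image.mp hS'
        rw [liftT_first, liftT_last]
        exact hopen' S' hS'2
    · -- cardinality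
      rw [Finset.card_insert_of_notMem hTgtnot, Finset.card_image_of_injOn hinj]
      have hOF : oddF H' = oddF H \ {w, u} := oddF_deleteEdges hp hne hwodd huodd
      have hsub : ({w, u} : Finset V) ⊆ oddF H := by
        intro x hx
        rcases Finset.mem_insert.mp hx with rfl | hx'
        · exact mem_oddF.mpr hwodd
        · rw [Finset.mem_singleton] at hx'
          subst hx'
          exact mem_oddF.mpr huodd
      have hc2 : ({w, u} : Finset V).card = 2 := by
        rw [Finset.card_insert_of_notMem (by simpa using hne), Finset.card_singleton]
      have hcard2 : (oddF H').card = (oddF H).card - 2 := by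
        rw [hOF, Finset.card_sdiff_of_subset hsub, hc2]
      have hge : 2 ≤ (oddF H).card := by
        calc 2 = ({w, u} : Finset V).card := hc2.symm
        _ ≤ (oddF H).card := Finset.card_le_card hsub
      omega
lemma deg_eq_sum_countP {H : SimpleGraph V} {D : Finset (GraphTrail H)}
    (hdisj : TrailsEdgeDisjoint D) (hcov : ∀ e ∈ H.edgeSet, ∃ T ∈ D, e ∈ T.edges) (v : V) :
    deg H v = ∑ T ∈ D, T.edges.countP (fun e => v ∈ e) := by
  classical
  have hI : H.edgeFinset.filter (fun e => v ∈ e) =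
      D.biUnion (fun T => (T.edges.filter (fun e => v ∈ e)).toFinset) := by
    ext e
    simp only [Finset.mem_biUnion, Finset.mem_filter, List.mem_toFinset, List.mem_filter,
      SimpleGraph.mem_edgeFinset, decide_eq_true_eq]
    constructor
    · rintro ⟨he, hv⟩
      obtain ⟨T, hT, hTe⟩ := hcov e he
      exact ⟨T, hT, hTe, hv⟩
    · rintro ⟨T, hT, hTe, hv⟩
      exact ⟨T.walk.edges_subset_edgeSet hTe, hv⟩
  have hdeg : deg H v = (H.edgeFinset.filter (fun e => v ∈ e)).card := by
    rw [deg_eq_degree, ← SimpleGraph.card_incidenceFinset_eq_degree,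
      SimpleGraph.incidenceFinset_eq_filter]
  rw [hdeg, hI, Finset.card_biUnion]
  · refine Finset.sum_congr rfl fun T hT => ?_
    rw [List.countP_eq_length_filter]
    exact List.toFinset_card_of_nodup (by exact T.isTrail.edges_nodup.filter _)
  · intro T₁ h₁ T₂ h₂ hne
    rw [Function.onFun, Finset.disjoint_left]
    intro e he₁ he₂
    simp only [List.mem_toFinset, List.mem_filter, decide_eq_true_eq] at he₁ he₂
    exact hdisj (Finset.mem_coe.mpr h₁) (Finset.mem_coe.mpr h₂) hne e he₁.1 he₂.1

/-- Any edge-disjoint covering family of trails has at least half as many trails as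
odd vertices. -/
lemma card_oddF_le {H : SimpleGraph V} {D : Finset (GraphTrail H)}
    (hdisj : TrailsEdgeDisjoint D) (hcov : ∀ e ∈ H.edgeSet, ∃ T ∈ D, e ∈ T.edges) :
    (oddF H).card ≤ 2 * D.card := by
  classical
  by_cases hO : oddF H = ∅
  · simp [hO]
  have hchoice : ∀ v ∈ oddF H, ∃ T, T ∈ D ∧ Odd (T.edges.countP (fun e => v ∈ e)) := by
    intro v hv
    rw [mem_oddF, deg_eq_sum_countP hdisj hcov v] at hv
    by_contra hc
    push_neg at hc
    rw [Nat.odd_iff, Finset.sum_nat_mod] at hv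
    have hz : ∀ T ∈ D, (T.edges.countP (fun e => v ∈ e)) % 2 = 0 := by
      intro T hT
      have := hc T hT
      rw [Nat.not_odd_iff_even, Nat.even_iff] at this
      exact this
    rw [Finset.sum_congr rfl hz] at hv
    simp at hv
  obtain ⟨v₀, hv₀⟩ := Finset.nonempty_iff_ne_empty.mpr hO
  obtain ⟨T₀, hT₀, -⟩ := hchoice v₀ hv₀
  set F : V → GraphTrail H := fun v =>
    if h : ∃ T, T ∈ D ∧ Odd (T.edges.countP (fun e => v ∈ e)) then h.choose else T₀ with hF
  have hmaps : ∀ v ∈ oddF H, F v ∈ D := by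
    intro v hv
    rw [hF]
    simp only
    rw [dif_pos (hchoice v hv)]
    exact (hchoice v hv).choose_spec.1
  have hoddv : ∀ v ∈ oddF H, Odd ((F v).edges.countP (fun e => v ∈ e)) := by
    intro v hv
    rw [hF]
    simp only
    rw [dif_pos (hchoice v hv)]
    exact (hchoice v hv).choose_spec.2
  refine Finset.card_le_mul_card_image_of_maps_to hmaps 2 ?_
  · intro T hT
    have hsub : (oddF H).filter (fun v => F v = T) ⊆ {T.first, T.last} := by
      intro v hv
      rw [Finset.mem_filter] at hv
      obtain ⟨hv1, hv2⟩ := hv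
      have ho := hoddv v hv1
      rw [hv2] at ho
      have := (trail_odd_countP_iff T.isTrail v).mp ho
      rcases this.2 with rfl | rfl
      · exact Finset.mem_insert_self _ _
      · exact Finset.mem_insert_of_mem (Finset.mem_singleton_self _)
    calc ((oddF H).filter (fun v => F v = T)).card ≤ ({T.first, T.last} : Finset V).card :=
        Finset.card_le_card hsub
      _ ≤ 2 := Finset.card_insert_le _ _ |>.trans (by simp)
lemma exists_odd_of_odd_sum {α : Type*} {s : Finset α} {f : α → ℕ}
    (h : Odd (∑ i ∈ s, f i)) : ∃ i ∈ s, Odd (f i) := by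
  classical
  by_contra hc
  push_neg at hc
  rw [Nat.odd_iff, Finset.sum_nat_mod] at h
  have hz : ∀ i ∈ s, f i % 2 = 0 := by
    intro i hi
    have := hc i hi
    rwa [Nat.not_odd_iff_even, Nat.even_iff] at this
  rw [Finset.sum_congr rfl hz] at h
  simp at h

/-- Removing a nil trail from a decomposition. -/
lemma repl_nil {H : SimpleGraph V} {D : Finset (GraphTrail H)}
    (hdisj : TrailsEdgeDisjoint D) (hcov : ∀ e ∈ H.edgeSet, ∃ S ∈ D, e ∈ S.edges)
    {T : GraphTrail H} (hT : T ∈ D) (hTe : T.edges = []) :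
    ∃ D₂ : Finset (GraphTrail H), TrailsEdgeDisjoint D₂ ∧
      (∀ e ∈ H.edgeSet, ∃ S ∈ D₂, e ∈ S.edges) ∧ D₂.card < D.card := by
  classical
  refine ⟨D.erase T, hdisj.mono (Finset.coe_subset.mpr (Finset.erase_subset _ _)), ?_, ?_⟩
  · intro e he
    obtain ⟨S, hS, hSe⟩ := hcov e he
    have hne : S ≠ T := by
      intro h
      rw [h, hTe] at hSe
      simp at hSe
    exact ⟨S, Finset.mem_erase.mpr ⟨hne, hS⟩, hSe⟩
  · rw [Finset.card_erase_of_mem hT]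
    have := Finset.card_pos.mpr ⟨T, hT⟩
    omega

/-- Replacing two trails by a single trail with the same edges. -/
lemma repl_merge {H : SimpleGraph V} {D : Finset (GraphTrail H)}
    (hdisj : TrailsEdgeDisjoint D) (hcov : ∀ e ∈ H.edgeSet, ∃ S ∈ D, e ∈ S.edges)
    {T S : GraphTrail H} (hT : T ∈ D) (hS : S ∈ D) (hTS : T ≠ S) (U : GraphTrail H)
    (hU : ∀ e, e ∈ U.edges ↔ e ∈ T.edges ∨ e ∈ S.edges) (hTne : T.edges ≠ []) :
    ∃ D₂ : Finset (GraphTrail H), TrailsEdgeDisjoint D₂ ∧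
      (∀ e ∈ H.edgeSet, ∃ W ∈ D₂, e ∈ W.edges) ∧ D₂.card < D.card := by
  classical
  set D₀ := (D.erase T).erase S with hD₀
  have hmemD₀ : ∀ W ∈ D₀, W ≠ T ∧ W ≠ S ∧ W ∈ D := by
    intro W hW
    rw [hD₀, Finset.mem_erase, Finset.mem_erase] at hW
    exact ⟨hW.2.1, hW.1, hW.2.2⟩
  obtain ⟨e₀, he₀⟩ := List.exists_mem_of_ne_nil _ hTne
  have hUdisj : ∀ W ∈ D₀, ∀ e, e ∈ U.edges → e ∉ W.edges := by
    intro W hW e he hWe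
    obtain ⟨hWT, hWS, hWD⟩ := hmemD₀ W hW
    rcases (hU e).mp he with h | h
    · exact hdisj (Finset.mem_coe.mpr hT) (Finset.mem_coe.mpr hWD) (Ne.symm hWT) e h hWe
    · exact hdisj (Finset.mem_coe.mpr hS) (Finset.mem_coe.mpr hWD) (Ne.symm hWS) e h hWe
  have hUnot : U ∉ D₀ := by
    intro hUmem
    obtain ⟨hUT, -, hUD⟩ := hmemD₀ U hUmem
    exact hdisj (Finset.mem_coe.mpr hT) (Finset.mem_coe.mpr hUD) (Ne.symm hUT) e₀ he₀
      ((hU e₀).mpr (Or.inl he₀))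
  refine ⟨insert U D₀, ?_, ?_, ?_⟩
  · intro A hA B hB hAB
    simp only [Finset.coe_insert, Set.mem_insert_iff, Finset.mem_coe] at hA hB
    rcases hA with rfl | hA
    · rcases hB with rfl | hB
      · exact absurd rfl hAB
      · exact hUdisj B hB
    · rcases hB with rfl | hB
      · intro e he hBe
        exact hUdisj A hA e hBe he
      · obtain ⟨hAT, hAS, hAD⟩ := hmemD₀ A hA
        obtain ⟨-, -, hBD⟩ := hmemD₀ B hB
        exact hdisj (Finset.mem_coe.mpr hAD) (Finset.mem_coe.mpr hBD) hAB
  · intro e he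
    obtain ⟨W, hW, hWe⟩ := hcov e he
    by_cases hWT : W = T
    · exact ⟨U, Finset.mem_insert_self _ _, (hU e).mpr (Or.inl (hWT ▸ hWe))⟩
    by_cases hWS : W = S
    · exact ⟨U, Finset.mem_insert_self _ _, (hU e).mpr (Or.inr (hWS ▸ hWe))⟩
    · exact ⟨W, Finset.mem_insert_of_mem
        (by rw [hD₀, Finset.mem_erase, Finset.mem_erase]; exact ⟨hWS, hWT, hW⟩), hWe⟩
  · have h2 : 2 ≤ D.card := Finset.one_lt_card.mpr ⟨T, hT, S, hS, hTS⟩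
    have hc₀ : D₀.card = D.card - 2 := by
      rw [hD₀, Finset.card_erase_of_mem, Finset.card_erase_of_mem hT]
      · omega
      · exact Finset.mem_erase.mpr ⟨Ne.symm hTS, hS⟩
    calc (insert U D₀).card ≤ D₀.card + 1 := Finset.card_insert_le _ _
      _ < D.card := by omega

/-- Merge two edge-disjoint trails sharing an endpoint into one trail. -/
lemma merge_at {H : SimpleGraph V} {T S : GraphTrail H}
    (hdisjTS : ∀ e ∈ T.edges, e ∉ S.edges) {x : V}
    (hxT : x = T.first ∨ x = T.last) (hxS : x = S.first ∨ x = S.last) :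
    ∃ U : GraphTrail H, ∀ e, e ∈ U.edges ↔ e ∈ T.edges ∨ e ∈ S.edges := by
  obtain ⟨a, p, hp, hpe⟩ : ∃ (a : V) (p : H.Walk a x), p.IsTrail ∧
      ∀ e, e ∈ p.edges ↔ e ∈ T.edges := by
    rcases hxT with h | h
    · refine ⟨T.last, (T.walk.reverse).copy rfl h.symm, ?_, ?_⟩
      · rw [Walk.isTrail_copy]
        exact T.isTrail.reverse _ 
      · intro e
        rw [Walk.edges_copy, Walk.edges_reverse, List.mem_reverse]
        rfl
    · refine ⟨T.first, T.walk.copy rfl h.symm, ?_, fun e => ?_⟩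
      · rw [Walk.isTrail_copy]
        exact T.isTrail
      · rw [Walk.edges_copy]
        rfl
  obtain ⟨b, q, hq, hqe⟩ : ∃ (b : V) (q : H.Walk x b), q.IsTrail ∧
      ∀ e, e ∈ q.edges ↔ e ∈ S.edges := by
    rcases hxS with h | h
    · refine ⟨S.last, S.walk.copy h.symm rfl, ?_, fun e => ?_⟩
      · rw [Walk.isTrail_copy]
        exact S.isTrail
      · rw [Walk.edges_copy]
        rfl
    · refine ⟨S.first, (S.walk.reverse).copy h.symm rfl, ?_, fun e => ?_⟩
      · rw [Walk.isTrail_copy]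
        exact S.isTrail.reverse _
      · rw [Walk.edges_copy, Walk.edges_reverse, List.mem_reverse]
        rfl
  have htrail : (p.append q).IsTrail := by
    rw [Walk.isTrail_def, Walk.edges_append, List.nodup_append]
    refine ⟨hp.edges_nodup, hq.edges_nodup, ?_⟩
    intro e he₁ e' he₂ heq
    subst heq
    exact hdisjTS e ((hpe e).mp he₁) ((hqe e).mp he₂)
  refine ⟨⟨a, b, p.append q, htrail⟩, fun e => ?_⟩
  show e ∈ (p.append q).edges ↔ _
  rw [Walk.edges_append, List.mem_append]
  rw [hpe, hqe]
@[simp] lemma gedges {H : SimpleGraph V} (T : GraphTrail H) : T.walk.edges = T.edges := rfl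

lemma reachable_of_mem_support {H : SimpleGraph V} {a b z : V} (q : H.Walk a b)
    (hz : z ∈ q.support) : H.Reachable a z := ⟨q.takeUntil z hz⟩

/-- In a minimum trail decomposition of a connected graph with an odd vertex, every trail is
open and has odd endpoints. -/
lemma min_decomp_open {G : SimpleGraph V} (hconn : G.Connected)
    (hodd : ∃ v, Odd (deg G v)) {D : Finset (GraphTrail G)}
    (hD : IsTrailDecomposition G D)
    (hmin : ∀ D' : Finset (GraphTrail G), IsTrailDecomposition G D' → D.card ≤ D'.card)
    {T : GraphTrail G} (hT : T ∈ D) :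
    T.first ≠ T.last ∧ Odd (deg G T.first) ∧ Odd (deg G T.last) := by
  classical
  obtain ⟨hdisj, hcov⟩ := hD
  have hne : T.first ≠ T.last := by
    by_contra heq
    by_cases hTe : T.edges = []
    · obtain ⟨D₂, h1, h2, h3⟩ := repl_nil hdisj hcov hT hTe
      exact absurd (hmin D₂ ⟨h1, h2⟩) (by omega)
    · have hfind : ∃ x y, x ∈ T.walk.support ∧ G.Adj x y ∧ s(x,y) ∉ T.edges := by
        by_contra hall
        push_neg at hall
        have hevensupp : ∀ x ∈ T.walk.support, Even (deg G x) := by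
          intro x hx
          have hcnt : Even (T.walk.edges.countP fun e => x ∈ e) := by
            rw [← Nat.not_odd_iff_even]
            intro hoddc
            exact ((trail_odd_countP_iff T.isTrail x).mp hoddc).1 heq
          have hdeg : deg G x = T.walk.edges.countP fun e => x ∈ e := by
            rw [countP_eq_card_filter_nbr T.isTrail x, deg_eq_degree, degree]
            symm
            congr 1
            apply Finset.filter_true_of_mem
            intro y hy
            exact hall x y hx (by rwa [mem_neighborFinset] at hy)
          rw [hdeg]
          exact hcnt
        obtain ⟨v₀, hv₀⟩ := hodd
        have hsupp : ∀ (a c : V) (q : G.Walk a c), c ∈ T.walk.support → a ∈ T.walk.support := by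
          intro a c q
          induction q with
          | nil => exact fun h => h
          | @cons a a₁ c hadj q' ih =>
            intro hc
            have ha₁ := ih hc
            exact T.walk.snd_mem_support_of_mem_edges (hall a₁ a ha₁ hadj.symm)
        obtain ⟨q⟩ := hconn.preconnected v₀ T.first
        have := hevensupp v₀ (hsupp v₀ T.first q T.walk.start_mem_support)
        rw [← Nat.not_odd_iff_even] at this
        exact this hv₀
      obtain ⟨x, y, hxsupp, hxy, hnotT⟩ := hfind
      obtain ⟨S, hS, hSe⟩ := hcov s(x,y) hxy
      have hST : S ≠ T := fun h => hnotT (h ▸ hSe)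
      set c := T.walk.copy rfl heq.symm with hc
      have hctrail : c.IsTrail := by
        rw [hc, Walk.isTrail_copy]
        exact T.isTrail
      have hxc : x ∈ c.support := by
        rw [hc, Walk.support_copy]
        exact hxsupp
      have hrot : (c.rotate x hxc).IsTrail := hctrail.rotate hxc
      have hrote : ∀ e, e ∈ (c.rotate x hxc).edges ↔ e ∈ T.edges := by
        intro e
        rw [(c.rotate_edges x hxc).perm.mem_iff, hc, Walk.edges_copy, gedges]
      have hxS : x ∈ S.walk.support := S.walk.fst_mem_support_of_mem_edges hSe
      have hdisjTS : ∀ e ∈ T.edges, e ∉ S.edges :=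
        hdisj (Finset.mem_coe.mpr hT) (Finset.mem_coe.mpr hS) (Ne.symm hST)
      have hdisj2 : ∀ e ∈ (c.rotate x hxc).edges, e ∉ S.walk.edges := by
        intro e he
        rw [gedges]
        exact hdisjTS e ((hrote e).mp he)
      obtain ⟨q, hq, -, hqmem⟩ := splice S.walk S.isTrail hxS (c.rotate x hxc) hrot hdisj2
      set U : GraphTrail G := ⟨S.first, S.last, q, hq⟩ with hU
      have hUmem : ∀ e, e ∈ U.edges ↔ e ∈ T.edges ∨ e ∈ S.edges := by
        intro e
        rw [hU]
        show e ∈ q.edges ↔ _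
        rw [hqmem e, gedges, ← hrote e]
        tauto
      obtain ⟨D₂, h1, h2, h3⟩ := repl_merge hdisj hcov hT hS (Ne.symm hST) U hUmem hTe
      exact absurd (hmin D₂ ⟨h1, h2⟩) (by omega)
  have hoddend : ∀ x, (x = T.first ∨ x = T.last) → Odd (deg G x) := by
    intro x hx
    by_contra hev
    rw [Nat.not_odd_iff_even] at hev
    have hsum := deg_eq_sum_countP hdisj hcov x
    have hcntT : Odd (T.edges.countP fun e => x ∈ e) := by
      have := (trail_odd_countP_iff T.isTrail x).mpr ⟨hne, hx⟩
      rwa [gedges] at this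
    have hadd := Finset.add_sum_erase D (fun W => W.edges.countP fun e => x ∈ e) hT
    have hrest : Odd (∑ W ∈ D.erase T, W.edges.countP fun e => x ∈ e) := by
      rw [Nat.odd_iff] at hcntT ⊢
      rw [Nat.even_iff] at hev
      omega
    obtain ⟨S, hSmem, hSodd⟩ := exists_odd_of_odd_sum hrest
    rw [Finset.mem_erase] at hSmem
    obtain ⟨hSTne, hSD⟩ := hSmem
    have hSprop := (trail_odd_countP_iff S.isTrail x).mp (by rwa [gedges])
    have hdisjTS : ∀ e ∈ T.edges, e ∉ S.edges :=
      hdisj (Finset.mem_coe.mpr hT) (Finset.mem_coe.mpr hSD) (Ne.symm hSTne)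
    obtain ⟨U, hU⟩ := merge_at hdisjTS hx hSprop.2
    obtain ⟨D₂, h1, h2, h3⟩ := repl_merge hdisj hcov hT hSD (Ne.symm hSTne) U hU
      (edges_ne_nil_of_ne T.walk hne)
    exact absurd (hmin D₂ ⟨h1, h2⟩) (by omega)
  exact ⟨hne, hoddend _ (Or.inl rfl), hoddend _ (Or.inr rfl)⟩

/-- In a minimum trail decomposition, every nontrivial component of the graph minus a trail
has an odd vertex. -/
lemma min_decomp_comp {G : SimpleGraph V} (hconn : G.Connected)
    (hodd : ∃ v, Odd (deg G v)) {D : Finset (GraphTrail G)}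
    (hD : IsTrailDecomposition G D)
    (hmin : ∀ D' : Finset (GraphTrail G), IsTrailDecomposition G D' → D.card ≤ D'.card)
    {T : GraphTrail G} (hT : T ∈ D) {v : V}
    (hv : 0 < deg (G.deleteEdges {e | e ∈ T.edges}) v) :
    ∃ y, (G.deleteEdges {e | e ∈ T.edges}).Reachable v y ∧
      Odd (deg (G.deleteEdges {e | e ∈ T.edges}) y) := by
  classical
  obtain ⟨hdisj, hcov⟩ := hD
  obtain ⟨hne, hf, hl⟩ := min_decomp_open hconn hodd ⟨hdisj, hcov⟩ hmin hT
  set H' := G.deleteEdges {e | e ∈ T.edges} with hH'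
  by_contra hno
  push_neg at hno
  have hev : ∀ y, H'.Reachable v y → Even (deg H' y) := by
    intro y hy
    rw [← Nat.not_odd_iff_even]
    exact hno y hy
  obtain ⟨y₀, hy₀⟩ := deg_pos_iff.mp hv
  have hy₀G : G.Adj v y₀ ∧ s(v,y₀) ∉ T.edges := by
    rw [hH', SimpleGraph.deleteEdges_adj] at hy₀
    exact ⟨hy₀.1, hy₀.2⟩
  obtain ⟨S, hS, hSe⟩ := hcov s(v,y₀) hy₀G.1
  have hST : S ≠ T := fun h => hy₀G.2 (h ▸ hSe)
  have hdisjST : ∀ e ∈ S.edges, e ∉ T.edges :=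
    hdisj (Finset.mem_coe.mpr hS) (Finset.mem_coe.mpr hT) hST
  have hSH' : ∀ e ∈ S.walk.edges, e ∈ H'.edgeSet := by
    intro e he
    rw [hH', SimpleGraph.edgeSet_deleteEdges]
    rw [gedges] at he
    exact ⟨S.walk.edges_subset_edgeSet (by rwa [gedges]), hdisjST e he⟩
  set w' := S.walk.transfer H' hSH' with hw'
  have hvS : v ∈ S.walk.support := S.walk.fst_mem_support_of_mem_edges hSe
  have hreach : ∀ z ∈ S.walk.support, H'.Reachable v z := by
    intro z hz
    have h1 : H'.Reachable S.first v := by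
      refine reachable_of_mem_support w' ?_
      rw [hw', Walk.support_transfer]
      exact hvS
    have h2 : H'.Reachable S.first z := by
      refine reachable_of_mem_support w' ?_
      rw [hw', Walk.support_transfer]
      exact hz
    exact h1.symm.trans h2
  have hSf := (min_decomp_open hconn hodd ⟨hdisj, hcov⟩ hmin hS).2.1
  have hxev : Even (deg H' S.first) := hev S.first (hreach S.first S.walk.start_mem_support)
  have hdd := deg_deleteEdges G T.isTrail S.first
  rw [gedges, ← hH'] at hdd
  have hcnt : Odd (T.edges.countP fun e => S.first ∈ e) := by
    rw [Nat.odd_iff] at hSf ⊢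
    rw [Nat.even_iff] at hxev
    omega
  have hxT : S.first = T.first ∨ S.first = T.last := by
    have := (trail_odd_countP_iff T.isTrail S.first).mp (by rwa [gedges])
    exact this.2
  obtain ⟨U, hU⟩ := merge_at (fun e he₁ he₂ => hdisjST e he₂ he₁) hxT (Or.inl rfl)
  obtain ⟨D₂, h1, h2, h3⟩ := repl_merge hdisj hcov hT hS (Ne.symm hST) U hU
    (edges_ne_nil_of_ne T.walk hne)
  exact absurd (hmin D₂ ⟨h1, h2⟩) (by omega)
end TrailDecomp

open TrailDecomp in
/-- Let `G` be connected with at least one odd-degree vertex. A trail `T` of `G`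
belongs to some minimum trail decomposition of `G` iff `T` begins and ends at distinct odd-degree
vertices and every connected component of `G` minus the edges of `T` that contains an edge has
at least one odd-degree vertex. -/
theorem mem_min_trail_decomposition_iff {V : Type*} [Fintype V] (G : SimpleGraph V)
    (hconn : G.Connected) (hodd : ∃ v, Odd ((G.neighborSet v).ncard)) (T : GraphTrail G) :
    (∃ D : Finset (GraphTrail G), IsTrailDecomposition G D ∧
        (∀ D' : Finset (GraphTrail G), IsTrailDecomposition G D' → D.card ≤ D'.card) ∧
        T ∈ D) ↔
      (T.first ≠ T.last ∧
        Odd ((G.neighborSet T.first).ncard) ∧ Odd ((G.neighborSet T.last).ncard) ∧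
        ∀ v : V, 0 < ((G.deleteEdges {e | e ∈ T.edges}).neighborSet v).ncard →
          ∃ w, (G.deleteEdges {e | e ∈ T.edges}).Reachable v w ∧
            Odd (((G.deleteEdges {e | e ∈ T.edges}).neighborSet w).ncard)) := by
  classical
  have hodd' : ∃ v, Odd (deg G v) := hodd
  constructor
  · rintro ⟨D, hD, hmin, hT⟩
    obtain ⟨h1, h2, h3⟩ := min_decomp_open hconn hodd' hD hmin hT
    refine ⟨h1, h2, h3, ?_⟩
    intro v hv
    exact min_decomp_comp hconn hodd' hD hmin hT hv
  · rintro ⟨hne, hf, hl, hcomp⟩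
    have hf' : Odd (deg G T.first) := hf
    have hl' : Odd (deg G T.last) := hl
    set H' := G.deleteEdges {e | e ∈ T.edges} with hH'
    have hle : H' ≤ G := SimpleGraph.deleteEdges_le _
    have hcomp' : ∀ v, 0 < deg H' v → ∃ w, H'.Reachable v w ∧ Odd (deg H' w) := hcomp
    obtain ⟨D', ⟨hdisj', hcov', hopen'⟩, hcard'⟩ :=
      exists_good_decomp H'.edgeSet.ncard H' rfl hcomp'
    have hEdel : H'.edgeSet = G.edgeSet \ {e | e ∈ T.edges} :=
      SimpleGraph.edgeSet_deleteEdges _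
    obtain ⟨e₁, he₁⟩ : ∃ e, e ∈ T.edges :=
      List.exists_mem_of_ne_nil _ (edges_ne_nil_of_ne T.walk hne)
    have hnotinT : ∀ S : GraphTrail H', ∀ e ∈ S.edges, e ∉ T.edges := by
      intro S e he hT'
      have hmem : e ∈ H'.edgeSet := S.walk.edges_subset_edgeSet he
      rw [hEdel] at hmem
      exact hmem.2 hT'
    have hinj : Set.InjOn (liftT hle) D' := by
      intro S₁ h₁ S₂ h₂ heq
      by_contra hne'
      obtain ⟨e, he⟩ := edges_nonempty_of_open S₁ (hopen' S₁ (Finset.mem_coe.mp h₁))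
      have he₂ : e ∈ S₂.edges := by
        have h1 : (liftT hle S₁).edges = (liftT hle S₂).edges := by rw [heq]
        rw [liftT_edges, liftT_edges] at h1
        rwa [← h1]
      exact hdisj' h₁ h₂ hne' e he he₂
    have hTnot : T ∉ D'.image (liftT hle) := by
      intro hmem
      rw [Finset.mem_image] at hmem
      obtain ⟨S, hS, hSe⟩ := hmem
      have h1 : (liftT hle S).edges = T.edges := by rw [hSe]
      rw [liftT_edges] at h1
      have he₁' : e₁ ∈ S.edges := by rw [h1]; exact he₁
      exact hnotinT S e₁ he₁' he₁
    set D := insert T (D'.image (liftT hle)) with hDdef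
    have hdec : IsTrailDecomposition G D := by
      constructor
      · intro A hA B hB hAB
        simp only [hDdef, Finset.coe_insert, Set.mem_insert_iff, Finset.mem_coe,
          Finset.mem_image] at hA hB
        rcases hA with rfl | ⟨S₁, hS₁, rfl⟩
        · rcases hB with rfl | ⟨S₂, hS₂, rfl⟩
          · exact absurd rfl hAB
          · intro e he hB
            rw [liftT_edges] at hB
            exact hnotinT S₂ e hB he
        · rcases hB with rfl | ⟨S₂, hS₂, rfl⟩
          · intro e he hB
            rw [liftT_edges] at he
            exact hnotinT S₁ e he hB
          · have hSne : S₁ ≠ S₂ := fun h => hAB (by rw [h])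
            intro e he hB
            rw [liftT_edges] at he hB
            exact hdisj' (Finset.mem_coe.mpr hS₁) (Finset.mem_coe.mpr hS₂) hSne e he hB
      · intro e he
        by_cases hep : e ∈ T.edges
        · exact ⟨T, Finset.mem_insert_self _ _, hep⟩
        · have hmem : e ∈ H'.edgeSet := by
            rw [hEdel]
            exact ⟨he, hep⟩
          obtain ⟨S, hS, hSe⟩ := hcov' e hmem
          exact ⟨liftT hle S, Finset.mem_insert_of_mem (Finset.mem_image_of_mem _ hS),
            by rwa [liftT_edges]⟩
    have hOF : oddF H' = oddF G \ {T.first, T.last} := by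
      rw [hH']
      exact oddF_deleteEdges T.isTrail hne hf' hl'
    have hsub : ({T.first, T.last} : Finset V) ⊆ oddF G := by
      intro x hx
      rcases Finset.mem_insert.mp hx with rfl | hx'
      · exact mem_oddF.mpr hf'
      · rw [Finset.mem_singleton] at hx'
        subst hx'
        exact mem_oddF.mpr hl'
    have hc2 : ({T.first, T.last} : Finset V).card = 2 := by
      rw [Finset.card_insert_of_notMem (by simpa using hne), Finset.card_singleton]
    have hge : 2 ≤ (oddF G).card := by
      calc 2 = ({T.first, T.last} : Finset V).card := hc2.symm
      _ ≤ (oddF G).card := Finset.card_le_card hsub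
    have hcard2 : (oddF H').card = (oddF G).card - 2 := by
      rw [hOF, Finset.card_sdiff_of_subset hsub, hc2]
    have hDcard : D.card = D'.card + 1 := by
      rw [hDdef, Finset.card_insert_of_notMem hTnot, Finset.card_image_of_injOn hinj]
    have hDtot : 2 * D.card = (oddF G).card := by omega
    refine ⟨D, hdec, ?_, by rw [hDdef]; exact Finset.mem_insert_self _ _⟩
    intro D₂ hD₂
    have hlb := card_oddF_le hD₂.1 hD₂.2
    omega
end

section
/- For positive integers t_1, ..., t_N and L, the inequality ∑_{i=1}^N ⌈t_i/L⌉ − ⌈(∑_{i=1}^N t_i)/L⌉ ≤ N − ⌈N/L⌉ holds. -/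
/-!
For an integer `a` and a positive integer `L`, `⌈a / L⌉ = ⌊(a - 1) / L⌋ + 1`. In these terms the
inequality says `∑ ⌊(tᵢ - 1) / L⌋ + ⌊(N - 1) / L⌋ ≤ ⌊(∑ tᵢ - 1) / L⌋`, which is the
superadditivity of the floor, since the arguments on the left add up to the one on the right.
-/

open Finset

section FloorRing

variable {α : Type*} [Field α] [LinearOrder α] [IsStrictOrderedRing α] [FloorRing α]

theorem Int.sum_floor_le_floor_sum {ι : Type*} (s : Finset ι) (x : ι → α) :
    ∑ i ∈ s, ⌊x i⌋ ≤ ⌊∑ i ∈ s, x i⌋ :=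
  Int.le_floor.2 <| by push_cast; exact sum_le_sum fun i _ => Int.floor_le (x i)

theorem Int.ceil_intCast_div_natCast_eq_floor_add_one (a : ℤ) {L : ℕ} (hL : 0 < L) :
    ⌈(a : α) / L⌉ = ⌊((a : α) - 1) / L⌋ + 1 := by
  have hL' : (0 : α) < L := by exact_mod_cast hL
  set q := ⌊((a : α) - 1) / L⌋
  rw [Int.ceil_eq_iff, Int.cast_add, Int.cast_one, add_sub_cancel_right]
  constructor
  · calc (q : α) ≤ ((a : α) - 1) / L := Int.floor_le _
      _ < a / L := by gcongr; linarith
  · have hlt : a - 1 < (q + 1) * L := by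
      rw [← Int.cast_lt (R := α)]
      push_cast
      rw [← div_lt_iff₀ hL']
      exact Int.lt_floor_add_one _
    have hle : a ≤ (q + 1) * L := by omega
    rw [div_le_iff₀ hL']
    exact_mod_cast hle

theorem Finset.sum_ceil_div_sub_ceil_sum_div_le {ι : Type*} (s : Finset ι) (a : ι → ℤ) {L : ℕ}
    (hL : 0 < L) :
    ∑ i ∈ s, ⌈(a i : α) / L⌉ - ⌈(∑ i ∈ s, (a i : α)) / L⌉ ≤ #s - ⌈(#s : α) / L⌉ := by
  set x := fun i => ((a i : α) - 1) / L
  set y := ((#s : α) - 1) / L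
  have hsum : ∑ i ∈ s, x i + y = (∑ i ∈ s, (a i : α) - 1) / L := by
    rw [← sum_div, ← add_div, sum_sub_distrib, sum_const, nsmul_one]
    ring
  have hfloor : ∑ i ∈ s, ⌊x i⌋ + ⌊y⌋ ≤ ⌊(∑ i ∈ s, (a i : α) - 1) / L⌋ :=
    calc ∑ i ∈ s, ⌊x i⌋ + ⌊y⌋ ≤ ⌊∑ i ∈ s, x i⌋ + ⌊y⌋ := by
          gcongr; exact Int.sum_floor_le_floor_sum s x
      _ ≤ ⌊∑ i ∈ s, x i + y⌋ := Int.le_floor_add _ _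
      _ = _ := by rw [hsum]
  have hcard := Int.ceil_intCast_div_natCast_eq_floor_add_one (α := α) #s hL
  have htotal := Int.ceil_intCast_div_natCast_eq_floor_add_one (α := α) (∑ i ∈ s, a i) hL
  push_cast at hcard htotal
  simp only [Int.ceil_intCast_div_natCast_eq_floor_add_one _ hL, sum_add_distrib, sum_const,
    nsmul_one, hcard, htotal]
  linarith

end FloorRing

theorem ceil_sum_sub_ceil_le_general {N L : ℕ} (hL : 0 < L)
    (t : Fin N → ℕ) :
    (∑ i, ⌈(t i : ℚ) / (L : ℚ)⌉) - ⌈(∑ i, (t i : ℚ)) / (L : ℚ)⌉ ≤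
      (N : ℤ) - ⌈(N : ℚ) / (L : ℚ)⌉ := by
  simpa using Finset.sum_ceil_div_sub_ceil_sum_div_le (α := ℚ) univ (fun i => (t i : ℤ)) hL

/-- For positive integers `t_1, …, t_N` and `L`:
`∑ ⌈t_i/L⌉ − ⌈(∑ t_i)/L⌉ ≤ N − ⌈N/L⌉`. -/
theorem ceil_sum_sub_ceil_le {N L : ℕ} (hN : 0 < N) (hL : 0 < L)
    (t : Fin N → ℕ) (ht : ∀ i, 0 < t i) :
    (∑ i, ⌈(t i : ℚ) / (L : ℚ)⌉) - ⌈(∑ i, (t i : ℚ)) / (L : ℚ)⌉ ≤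
      (N : ℤ) - ⌈(N : ℚ) / (L : ℚ)⌉ :=
  ceil_sum_sub_ceil_le_general hL t
end
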